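/- Assume ρ ≥ 2. Let n ≥ 2 be an integer and p a nonnegative integer; set q := 2p + n − 1. Let C, K, L ∈ V with L ∈ Pos, and set a := L² and b := K·L. Assume: C² = −n; C·K = 2p + n − 2; C·L ≥ 1; b² − a·K² − a/n ≥ 0; and, in case q > b/a, also −K² ≥ 1/n + a·q² − 2b·q. Set s_n = (b + √(b² − a·K² − a/n))/a. Then R(C) ⊆ Pos̄ + R(K − s_n•L); more precisely, there exists a real number t₀ ≥ 1/n such that t₀•C − (K − s_n•L) lies in Pos̄ and satisfies (t₀•C − (K − s_n•L))² = 0. -/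
import Mathlib


/-- The Minkowski bilinear form on `Fin ρ → ℝ`:
`B(x,y) = x 0 * y 0 − ∑_{i ≠ 0} x i * y i`, of signature `(1, ρ−1)`. -/
noncomputable def Bform {ρ : ℕ} [NeZero ρ] (x y : Fin ρ → ℝ) : ℝ :=
  x 0 * y 0 - ∑ i ∈ Finset.univ.erase (0 : Fin ρ), x i * y i

/-- The closed positive cone `Pos̄ = {x : x² ≥ 0 ∧ x 0 ≥ 0}`. -/
def PosBar (ρ : ℕ) [NeZero ρ] : Set (Fin ρ → ℝ) :=
  {x | 0 ≤ Bform x x ∧ 0 ≤ x 0}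

/-- The open positive cone `Pos = {x : x² > 0 ∧ x 0 > 0}`. -/
def PosOpen (ρ : ℕ) [NeZero ρ] : Set (Fin ρ → ℝ) :=
  {x | 0 < Bform x x ∧ 0 < x 0}

/-- The ray `R(v) = {t • v : t ≥ 0}` spanned by `v`. -/
def Ray {ρ : ℕ} (v : Fin ρ → ℝ) : Set (Fin ρ → ℝ) :=
  {w | ∃ t : ℝ, 0 ≤ t ∧ w = t • v}

lemma Bform_smul_left {ρ : ℕ} [NeZero ρ] (t : ℝ) (x y : Fin ρ → ℝ) :
    Bform (t • x) y = t * Bform x y := by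
  simp only [Bform, Pi.smul_apply, smul_eq_mul, mul_sub, Finset.mul_sum, mul_assoc]

lemma Bform_sub_left {ρ : ℕ} [NeZero ρ] (x y z : Fin ρ → ℝ) :
    Bform (x - y) z = Bform x z - Bform y z := by
  simp only [Bform, Pi.sub_apply, sub_mul, Finset.sum_sub_distrib]
  ring

lemma Bform_comm {ρ : ℕ} [NeZero ρ] (x y : Fin ρ → ℝ) :
    Bform x y = Bform y x := by
  simp only [Bform, mul_comm]

lemma Bform_smul_right {ρ : ℕ} [NeZero ρ] (t : ℝ) (x y : Fin ρ → ℝ) :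
    Bform x (t • y) = t * Bform x y := by
  rw [Bform_comm, Bform_smul_left, Bform_comm]

lemma Bform_sub_right {ρ : ℕ} [NeZero ρ] (x y z : Fin ρ → ℝ) :
    Bform x (y - z) = Bform x y - Bform x z := by
  rw [Bform_comm, Bform_sub_left, Bform_comm y x, Bform_comm z x]

/-- Reverse Cauchy–Schwarz sign lemma: a causal vector pairing nonnegatively with a
future timelike vector has nonnegative time coordinate. -/
lemma pos0_of_BL {ρ : ℕ} [NeZero ρ] (x L : Fin ρ → ℝ) (hx2 : 0 ≤ Bform x x)
    (hxL : 0 ≤ Bform x L) (hL : L ∈ PosOpen ρ) : 0 ≤ x 0 := by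
  by_contra h
  push_neg at h
  set s := Finset.univ.erase (0 : Fin ρ)
  have hX : ∑ i ∈ s, x i ^ 2 ≤ x 0 ^ 2 := by
    have := hx2; simp only [Bform] at this
    have hsq : ∑ i ∈ s, x i * x i = ∑ i ∈ s, x i ^ 2 := by
      apply Finset.sum_congr rfl; intro i _; ring
    nlinarith [this]
  have hY : ∑ i ∈ s, L i ^ 2 < L 0 ^ 2 := by
    have := hL.1; simp only [Bform] at this
    have hsq : ∑ i ∈ s, L i * L i = ∑ i ∈ s, L i ^ 2 := by
      apply Finset.sum_congr rfl; intro i _; ring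
    nlinarith [this]
  have hP : ∑ i ∈ s, x i * L i ≤ x 0 * L 0 := by
    have := hxL; simp only [Bform] at this; linarith
  have hCS := Finset.sum_mul_sq_le_sq_mul_sq s x L
  have hL0 : 0 < L 0 := hL.2
  have hYnn : 0 ≤ ∑ i ∈ s, L i ^ 2 := Finset.sum_nonneg fun i _ => sq_nonneg _
  have hXnn : 0 ≤ ∑ i ∈ s, x i ^ 2 := Finset.sum_nonneg fun i _ => sq_nonneg _
  have hx02 : 0 < x 0 ^ 2 := by nlinarith
  have h1 : (x 0 * L 0) ^ 2 ≤ (∑ i ∈ s, x i * L i) ^ 2 := by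
    nlinarith [mul_neg_of_neg_of_pos h hL0]
  have h2 : (∑ i ∈ s, x i ^ 2) * ∑ i ∈ s, L i ^ 2 ≤ x 0 ^ 2 * ∑ i ∈ s, L i ^ 2 :=
    mul_le_mul_of_nonneg_right hX hYnn
  have h3 : x 0 ^ 2 * ∑ i ∈ s, L i ^ 2 < x 0 ^ 2 * L 0 ^ 2 :=
    mul_lt_mul_of_pos_left hY hx02
  nlinarith

set_option maxHeartbeats 1000000 in
/-- Proposition 5.3 ((−n,p)-case). -/
theorem stmt11 {ρ : ℕ} [NeZero ρ] (hρ : 2 ≤ ρ) (n : ℕ) (hn : 2 ≤ n) (p : ℕ)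
    (q : ℝ) (hq : q = 2 * (p : ℝ) + (n : ℝ) - 1)
    (C K L : Fin ρ → ℝ) (hL : L ∈ PosOpen ρ)
    (a b : ℝ) (ha : a = Bform L L) (hb : b = Bform K L)
    (hC2 : Bform C C = -(n : ℝ)) (hCK : Bform C K = 2 * (p : ℝ) + (n : ℝ) - 2)
    (hCL : 1 ≤ Bform C L)
    (hdisc : 0 ≤ b ^ 2 - a * Bform K K - a / (n : ℝ))
    (hp : b / a < q → 1 / (n : ℝ) + a * q ^ 2 - 2 * b * q ≤ -(Bform K K))
    (sn : ℝ) (hsn : sn = (b + Real.sqrt (b ^ 2 - a * Bform K K - a / (n : ℝ))) / a) :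
    (Ray C ⊆ {z | ∃ α ∈ PosBar ρ, ∃ w ∈ Ray (K - sn • L), z = α + w}) ∧
      ∃ t₀ : ℝ, 1 / (n : ℝ) ≤ t₀ ∧ (t₀ • C - (K - sn • L)) ∈ PosBar ρ ∧
        Bform (t₀ • C - (K - sn • L)) (t₀ • C - (K - sn • L)) = 0 := by
  have hn0 : (0 : ℝ) < (n : ℝ) := by exact_mod_cast Nat.lt_of_lt_of_le Nat.zero_lt_two hn
  have ha0 : 0 < a := ha ▸ hL.1
  set Δ : ℝ := b ^ 2 - a * Bform K K - a / (n : ℝ) with hΔdef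
  have hs0 : 0 ≤ Real.sqrt Δ := Real.sqrt_nonneg _
  have hs2 : Real.sqrt Δ ^ 2 = Δ := Real.sq_sqrt hdisc
  have hq1 : 1 ≤ q := by
    have : (2:ℝ) ≤ (n:ℝ) := by exact_mod_cast hn
    have : (0:ℝ) ≤ (p:ℝ) := Nat.cast_nonneg p
    nlinarith [Nat.cast_nonneg (α := ℝ) p, (by exact_mod_cast hn : (2:ℝ) ≤ (n:ℝ))]
  -- sn ≥ q
  have hsnq : q ≤ sn := by
    by_cases hcase : b / a < q
    · have h1 := hp hcase
      have h2 : (a * q - b) ^ 2 ≤ Δ := by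
        have h' := mul_le_mul_of_nonneg_left h1 ha0.le
        have hn' : (n:ℝ) ≠ 0 := ne_of_gt hn0
        simp only [hΔdef]
        rw [div_eq_mul_one_div a (n:ℝ)]
        nlinarith [h']
      have h3 : a * q - b ≤ Real.sqrt Δ := by
        have := Real.sqrt_le_sqrt h2
        rw [Real.sqrt_sq_eq_abs] at this
        calc a * q - b ≤ |a * q - b| := le_abs_self _
          _ ≤ Real.sqrt Δ := this
      rw [hsn, le_div_iff₀ ha0]
      nlinarith [h3]
    · push_neg at hcase
      rw [hsn, le_div_iff₀ ha0]
      rw [le_div_iff₀ ha0] at hcase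
      nlinarith
  have hsn1 : 1 ≤ sn := le_trans hq1 hsnq
  set c : ℝ := Bform C L with hc
  set β : ℝ := q - 1 - sn * c with hβdef
  have hβ : β ≤ -1 := by
    have : sn * 1 ≤ sn * c := by nlinarith
    simp only [hβdef]; nlinarith
  have hβ2 : 0 ≤ β ^ 2 - 1 := by nlinarith [hβ]
  set e : ℝ := Real.sqrt (β ^ 2 - 1) with hedef
  have he0 : 0 ≤ e := Real.sqrt_nonneg _
  have he2 : e ^ 2 = β ^ 2 - 1 := Real.sq_sqrt hβ2
  set t₀ : ℝ := (-β + e) / n with ht₀def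
  have ht₀ : 1 / (n : ℝ) ≤ t₀ := by
    rw [ht₀def, div_le_div_iff₀ hn0 hn0]
    nlinarith
  have ht₀pos : 0 < t₀ := lt_of_lt_of_le (by positivity) ht₀
  set D : Fin ρ → ℝ := K - sn • L with hD
  -- key Bform values
  have hDL : Bform D L = -Real.sqrt Δ := by
    rw [hD, Bform_sub_left, Bform_smul_left, ← hb, ← ha]
    have : sn * a = b + Real.sqrt Δ := by
      rw [hsn]; field_simp
    linarith
  have hCD : Bform C D = β := by
    rw [hD, Bform_sub_right, Bform_smul_right, hCK, ← hc, hβdef, hq]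
    ring
  have ha' : a ≠ 0 := ne_of_gt ha0
  have hsna : sn * a = b + Real.sqrt Δ := by rw [hsn]; field_simp
  have hKD : Bform K D = Bform K K - sn * b := by
    rw [hD, Bform_sub_right, Bform_smul_right, ← hb]
  have hLD : Bform L D = b - sn * a := by
    rw [hD, Bform_sub_right, Bform_smul_right, ← ha, Bform_comm L K, ← hb]
  have hDD : Bform D D = -(1 / (n : ℝ)) := by
    nth_rewrite 1 [hD]
    rw [Bform_sub_left, Bform_smul_left, hKD, hLD]
    have key : a * ((Bform K K - sn * b - sn * (b - sn * a)) - (-(1 / (n : ℝ)))) = 0 := by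
      linear_combination (sn * a - b + Real.sqrt Δ) * hsna + hs2 + hΔdef
    have h0 := (mul_eq_zero.mp key).resolve_left ha'
    linarith [h0]
  set M : Fin ρ → ℝ := t₀ • C - D with hM
  have hnt : (n : ℝ) * t₀ = -β + e := by
    rw [ht₀def]; field_simp
  have e2 : Bform C M = t₀ * (-(n : ℝ)) - β := by
    rw [hM, Bform_sub_right, Bform_smul_right, hC2, hCD]
  have e3 : Bform D M = t₀ * β - (-(1 / (n : ℝ))) := by
    rw [hM, Bform_sub_right, Bform_smul_right, Bform_comm D C, hCD, hDD]
  have hMM : Bform M M = 0 := by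
    have e1 : Bform M M = t₀ * Bform C M - Bform D M := by
      nth_rewrite 1 [hM]
      rw [Bform_sub_left, Bform_smul_left]
    rw [e1, e2, e3]
    have hn' : (n : ℝ) ≠ 0 := ne_of_gt hn0
    have key : (n : ℝ) * ((t₀ * (t₀ * (-(n : ℝ)) - β) - (t₀ * β - -(1 / (n : ℝ)))) - 0) = 0 := by
      have hinv : (n : ℝ) * (1 / (n : ℝ)) = 1 := by field_simp
      linear_combination (-((n : ℝ) * t₀ + β + e)) * hnt - he2 - hinv
    have h0 := (mul_eq_zero.mp key).resolve_left hn'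
    linarith [h0]
  have hML : 0 ≤ Bform M L := by
    rw [hM, Bform_sub_left, Bform_smul_left, ← hc, hDL]
    nlinarith
  have hM0 : 0 ≤ M 0 := pos0_of_BL M L (le_of_eq hMM.symm) hML hL
  have hMPos : M ∈ PosBar ρ := ⟨le_of_eq hMM.symm, hM0⟩
  constructor
  · rintro z ⟨t, ht, rfl⟩
    refine ⟨(t / t₀) • M, ?_, (t / t₀) • D, ⟨t / t₀, by positivity, rfl⟩, ?_⟩
    · constructor
      · rw [Bform_smul_left, Bform_smul_right, hMM]; ring_nf; simp
      · have : ((t / t₀) • M) 0 = (t / t₀) * M 0 := rfl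
        rw [this]; positivity
    · have hts : (t / t₀) • (t₀ • C) = t • C := by
        rw [smul_smul, div_mul_cancel₀ _ (ne_of_gt ht₀pos)]
      rw [hM, smul_sub, hts]
      abel
  · exact ⟨t₀, ht₀, hMPos, hMM⟩
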